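/- arXiv:1504.07181 — 4 statements merged into one kernel-verified Lean document; each statement's English description precedes it below -/
import Mathlib

section
/- Construction of a semigroup from index data: Let S be a semigroup, and for each x ∈ S let T_x be a nonempty set, with T_x pairwise disjoint. Suppose for each triple (x, y, xy) there is a map f_{(x,y,xy)} : T_x → T_{xy}, satisfying f_{(xy,z,xyz)} ∘ f_{(x,y,xy)} = f_{(x,yz,xyz)} for all x, y, z ∈ S. Define on T = ⋃_{x∈S} T_x the operation a ∘ b = f_{(x,y,xy)}(a) for a ∈ T_x, b ∈ T_y. Then (T, ∘) is a semigroup (the operation is associative). -/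
/-- The fiber `T_x` is `π ⁻¹ {x}`, and `f x y` restricted to it is `f_{(x,y,xy)}`. -/
theorem theta_construction_semigroup_general {S T : Type*} [Semigroup S]
    (π : T → S)
    (f : S → S → T → T)
    (hmap : ∀ (x y : S) (t : T), π t = x → π (f x y t) = x * y)
    (hcoc : ∀ (x y z : S) (t : T), π t = x → f (x * y) z (f x y t) = f x (y * z) t) :
    ∀ a b c : T,
      f (π (f (π a) (π b) a)) (π c) (f (π a) (π b) a)
        = f (π a) (π (f (π b) (π c) b)) a := by
  intro a b c
  rw [hmap (π a) (π b) a rfl, hmap (π b) (π c) b rfl]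
  exact hcoc (π a) (π b) (π c) a rfl

/-- The θ-construction yields a semigroup.  The disjoint union `T = ⋃_{x∈S} T_x` of the
nonempty pairwise disjoint fibers is modelled by a surjection `π : T → S` (the fiber of
`x` is `π ⁻¹ {x}`); the structure maps `f_{(x,y,xy)} : T_x → T_{xy}` are modelled by
`f : S → S → T → T` sending fibers to fibers, satisfying the cocycle condition.  The
operation `a ∘ b = f_{(π a, π b, π a * π b)}(a)` is associative. -/
theorem theta_construction_semigroup {S T : Type*} [Semigroup S]
    (π : T → S) (hπ : Function.Surjective π)
    (f : S → S → T → T)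
    (hmap : ∀ (x y : S) (t : T), π t = x → π (f x y t) = x * y)
    (hcoc : ∀ (x y z : S) (t : T), π t = x → f (x * y) z (f x y t) = f x (y * z) t) :
    ∀ a b c : T,
      f (π (f (π a) (π b) a)) (π c) (f (π a) (π b) a)
        = f (π a) (π (f (π b) (π c) b)) a :=
  theta_construction_semigroup_general π f hmap hcoc
end

section
/- In the θ-construction (T, ∘) derived from a semigroup S, if S is left reductive then the θ(T)-classes of T are exactly the fibers T_x (x ∈ S); i.e., if a ∈ T_x and b ∈ T_y satisfy t ∘ a = t ∘ b for all t ∈ T, then x = y. -/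
theorem theta_construction_classes_eq_fibers_general {S T : Type*} [Semigroup S]
    (hred : ∀ a b : S, (∀ x : S, x * a = x * b) → a = b)
    (π : T → S) (hπ : Function.Surjective π)
    (f : S → S → T → T)
    (hmap : ∀ (x y : S) (t : T), π t = x → π (f x y t) = x * y) :
    ∀ a b : T, (∀ t : T, f (π t) (π a) t = f (π t) (π b) t) → π a = π b := by
  intro a b h
  refine hred _ _ fun x => ?_
  obtain ⟨t, rfl⟩ := hπ x
  rw [← hmap _ _ t rfl, ← hmap _ _ t rfl, h t]

/-- In the θ-construction `(T, ∘)` derived from a left reductive semigroup `S`, the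
`θ(T)`-classes are exactly the fibers: if `a ∈ T_x`, `b ∈ T_y` and `t ∘ a = t ∘ b`
for all `t ∈ T`, then `x = y` (i.e. `π a = π b`). -/
theorem theta_construction_classes_eq_fibers {S T : Type*} [Semigroup S]
    (hred : ∀ a b : S, (∀ x : S, x * a = x * b) → a = b)
    (π : T → S) (hπ : Function.Surjective π)
    (f : S → S → T → T)
    (hmap : ∀ (x y : S) (t : T), π t = x → π (f x y t) = x * y)
    (hcoc : ∀ (x y z : S) (t : T), π t = x → f (x * y) z (f x y t) = f x (y * z) t) :
    ∀ a b : T, (∀ t : T, f (π t) (π a) t = f (π t) (π b) t) → π a = π b :=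
  theta_construction_classes_eq_fibers_general hred π hπ f hmap
end

section
/- Let S be a semigroup whose congruences satisfy the ascending chain condition. Then there exists a nonnegative integer n such that the chain ι^(0) ⊆ ι^(1) ⊆ ⋯ stabilizes at step n (ι^(n) = ι^(n+1) = ⋯), where ι^(0) is the identity relation and ι^(i+1) = (ι^(i))*, and moreover S/ι^(n) is left reductive. -/
/-- For a congruence `ρ` on a semigroup `S`, the congruence `ρ*`:
`(a,b) ∈ ρ*` iff `(x*a, x*b) ∈ ρ` for all `x`. -/
def conStar {S : Type*} [Semigroup S] (ρ : Con S) : Con S where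
  r a b := ∀ x : S, ρ (x * a) (x * b)
  iseqv := ⟨fun _ _ => ρ.refl _, fun h x => ρ.symm (h x),
    fun h1 h2 x => ρ.trans (h1 x) (h2 x)⟩
  mul' := by
    intro a b c d h1 h2 x
    have e1 : ρ ((x * a) * c) ((x * b) * c) := ρ.mul (h1 x) (ρ.refl c)
    have e2 : ρ ((x * b) * c) ((x * b) * d) := h2 (x * b)
    have := ρ.trans e1 e2
    simpa [mul_assoc] using this

/-- The chain `ι^(0) ⊆ ι^(1) ⊆ ⋯` with `ι^(0)` the identity congruence and
`ι^(i+1) = (ι^(i))*`. -/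
def iotaCon (S : Type*) [Semigroup S] : ℕ → Con S
  | 0 => ⊥
  | i + 1 => conStar (iotaCon S i)

section

variable {S : Type*} [Semigroup S]

lemma le_conStar (ρ : Con S) : ρ ≤ conStar ρ :=
  fun _ _ hab x => ρ.mul (ρ.refl x) hab

lemma rel_of_forall_rel_mul_of_conStar_eq {ρ : Con S} (hρ : conStar ρ = ρ) {a b : S}
    (hab : ∀ x : S, ρ (x * a) (x * b)) : ρ a b := by
  rw [← hρ]
  exact hab

lemma iotaCon_le_succ (n : ℕ) : iotaCon S n ≤ iotaCon S (n + 1) :=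
  le_conStar (iotaCon S n)

end

/-- If the congruences of a semigroup `S` satisfy the ascending chain condition, then
the chain `ι^(0) ⊆ ι^(1) ⊆ ⋯` stabilizes at some `n`, and `S/ι^(n)` is left reductive
(expressed on representatives: if `x̄ā = x̄b̄` for all `x̄`, then `ā = b̄`). -/
theorem iota_chain_stabilizes_left_reductive (S : Type*) [Semigroup S]
    (hacc : ∀ c : ℕ → Con S, (∀ n, c n ≤ c (n + 1)) → ∃ N, ∀ m, N ≤ m → c m = c N) :
    ∃ n : ℕ, (∀ m, n ≤ m → iotaCon S m = iotaCon S n) ∧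
      ∀ a b : S, (∀ x : S, iotaCon S n (x * a) (x * b)) → iotaCon S n a b := by
  obtain ⟨N, hN⟩ := hacc (iotaCon S) iotaCon_le_succ
  have hfixed : conStar (iotaCon S N) = iotaCon S N := hN (N + 1) N.le_succ
  exact ⟨N, hN, fun _ _ => rel_of_forall_rel_mul_of_conStar_eq hfixed⟩
end

section
/- For a semigroup S, the congruence θ_n (defined by (a,b) ∈ θ_n iff xa = xb for all x ∈ S^n) equals the universal relation ω_S for some positive integer n if and only if S is an ideal extension of a left zero semigroup by a nilpotent semigroup; equivalently, there exist a positive integer n and a left zero subsemigroup L of S that is an ideal, with S^n ⊆ L. -/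
/-!
If `θ_n = ω_S`, every product `u = y * c` of `n + 1` factors satisfies `u * s = y * (c * s) = y * c = u`,
so `S^(n+1)` consists of left zeros of `S`; it is then a left zero ideal containing `S^(n+1)`.
Conversely, an element `x` of a left zero ideal `L` is a left zero of `S`, because `x * s` and `s * x`
lie in `L`, whence `x * s = (x * s) * x = x * (s * x) = x`; so `x * a = x = x * b` for `x ∈ Sⁿ ⊆ L`.
-/

/-- `IsProd n x` means `x` is a product of `n` elements of the semigroup, i.e. `x ∈ Sⁿ`. -/
inductive IsProd {S : Type*} [Semigroup S] : ℕ → S → Prop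
  | base (s : S) : IsProd 1 s
  | step {n : ℕ} {a : S} (b : S) : IsProd n a → IsProd (n + 1) (a * b)

namespace IsProd

variable {S : Type*} [Semigroup S] {n : ℕ}

lemma mul_left {a : S} (b : S) (h : IsProd n a) : IsProd (n + 1) (b * a) := by
  induction h with
  | base s => exact step s (base b)
  | step c _ ih => rw [← mul_assoc]; exact step c ih

lemma exists_eq_mul {x : S} (h : IsProd (n + 2) x) : ∃ y c : S, IsProd (n + 1) y ∧ x = y * c := by
  cases h with
  | step c hy => exact ⟨_, c, hy, rfl⟩

lemma mul_eq_self_of_forall_mul_eq (h : ∀ a b x : S, IsProd (n + 1) x → x * a = x * b)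
    {u : S} (hu : IsProd (n + 2) u) (s : S) : u * s = u := by
  obtain ⟨y, c, hy, rfl⟩ := hu.exists_eq_mul
  rw [mul_assoc, h _ _ y hy]

lemma mul_left_of_forall_mul_eq (h : ∀ a b x : S, IsProd (n + 1) x → x * a = x * b)
    {u : S} (hu : IsProd (n + 2) u) (s : S) : IsProd (n + 2) (s * u) := by
  obtain ⟨y, c, hy, hyc⟩ := (hu.mul_left s).exists_eq_mul
  rwa [hyc, mul_eq_self_of_forall_mul_eq h hy]

end IsProd

lemma mul_eq_self_of_mem_leftZero_ideal {S : Type*} [Semigroup S] {L : Set S}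
    (hlz : ∀ u ∈ L, ∀ v ∈ L, u * v = u) (hideal : ∀ l ∈ L, ∀ s : S, l * s ∈ L ∧ s * l ∈ L)
    {x : S} (hx : x ∈ L) (s : S) : x * s = x :=
  calc x * s = x * s * x := (hlz _ (hideal x hx s).1 x hx).symm
    _ = x * (s * x) := mul_assoc x s x
    _ = x := hlz x hx _ (hideal x hx s).2

/-- `θ_n` is the universal relation `ω_S` for some positive `n` (i.e. `x*a = x*b` for
all `a, b ∈ S` and all `x ∈ Sⁿ`) if and only if `S` is an ideal extension of a left
zero semigroup by a nilpotent semigroup, i.e. there are a positive integer `n` and a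
left zero subsemigroup `L` of `S` which is an ideal, with `Sⁿ ⊆ L`. -/
theorem thetaN_universal_iff_ideal_extension {S : Type*} [Semigroup S] :
    (∃ n : ℕ, 1 ≤ n ∧ ∀ a b : S, ∀ x : S, IsProd n x → x * a = x * b) ↔
    (∃ n : ℕ, 1 ≤ n ∧ ∃ L : Set S,
      (∀ u ∈ L, ∀ v ∈ L, u * v = u) ∧                 -- L is a left zero semigroup
      (∀ l ∈ L, ∀ s : S, l * s ∈ L ∧ s * l ∈ L) ∧     -- L is an ideal of S
      (∀ x : S, IsProd n x → x ∈ L)) := by            -- Sⁿ ⊆ L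
  constructor
  · rintro ⟨_ | n, hn, h⟩
    · omega
    refine ⟨n + 2, by omega, {u | IsProd (n + 2) u}, ?_, ?_, fun _ hx => hx⟩
    · exact fun u hu v _ => IsProd.mul_eq_self_of_forall_mul_eq h hu v
    · intro l hl s
      rw [IsProd.mul_eq_self_of_forall_mul_eq h hl s]
      exact ⟨hl, IsProd.mul_left_of_forall_mul_eq h hl s⟩
  · rintro ⟨n, hn, L, hlz, hideal, hsub⟩
    refine ⟨n, hn, fun a b x hx => ?_⟩
    have hxL : x ∈ L := hsub x hx
    rw [mul_eq_self_of_mem_leftZero_ideal hlz hideal hxL a,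
      mul_eq_self_of_mem_leftZero_ideal hlz hideal hxL b]
end
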